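/- Let F be a submodular function on V with F(∅) = 0, f its Lovász extension, and x* the unique minimizer of f(x) + (1/2)‖x‖² over ℝ^V. Then for every μ ∈ ℝ, both S_μ^≥ = {i ∈ V : x*_i ≥ μ} and S_μ^> = {i ∈ V : x*_i > μ} minimize the function S ↦ F(S) + μ|S| over all S ⊆ V; moreover every minimizer T of S ↦ F(S) + μ|S| satisfies S_μ^> ⊆ T ⊆ S_μ^≥. In particular (taking μ = 0), {i : x*_i > 0} is the minimal minimizer of F and {i : x*_i ≥ 0} is the maximal minimizer of F. -/

import Mathlib

open Finset
open Finset

def Submodular {n : ℕ} (F : Finset (Fin n) → ℝ) : Prop :=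
  ∀ S T : Finset (Fin n), F (S ∪ T) + F (S ∩ T) ≤ F S + F T

def basePolytope {n : ℕ} (F : Finset (Fin n) → ℝ) : Set (Fin n → ℝ) :=
  {y | (∀ S : Finset (Fin n), ∑ i ∈ S, y i ≤ F S) ∧ ∑ i, y i = F Finset.univ}

def SortsDesc {n : ℕ} (x : Fin n → ℝ) (σ : Equiv.Perm (Fin n)) : Prop :=
  ∀ j k : Fin n, j ≤ k → x (σ k) ≤ x (σ j)

def lovaszVal {n : ℕ} (F : Finset (Fin n) → ℝ) (x : Fin n → ℝ) (σ : Equiv.Perm (Fin n)) : ℝ :=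
  ∑ k : Fin n, x (σ k) *
    (F ((Finset.univ.filter (fun j => j ≤ k)).image ⇑σ)
      - F ((Finset.univ.filter (fun j => j < k)).image ⇑σ))

def IsLovasz {n : ℕ} (F : Finset (Fin n) → ℝ) (f : (Fin n → ℝ) → ℝ) : Prop :=
  ∀ (x : Fin n → ℝ) (σ : Equiv.Perm (Fin n)), SortsDesc x σ → f x = lovaszVal F x σ

/-!
The optimality of `x*` makes `-x*` a subgradient of the Lovász extension `f` at `x*`. By
submodularity `f` is sublinear (the greedy vector of a sorting permutation maximizes `⟨x, ·⟩` over
the base polytope, by Abel summation), so perturbing `x*` along `1_T` gives `-x*(T) ≤ F(T)` for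
every `T`. On a level set `A` of `x*`, lowering `x*` on `A` by less than the gap keeps it sorted
in the same order, so `f` is additive along `-1_A` and we get `F(A) ≤ -x*(A)`. Hence
`T ↦ ∑_{i ∈ T} (μ - x*_i)` is a modular minorant of `F + μ|·|` that is tight on the level sets
`{x* ≥ μ}` and `{x* > μ}`, and the minimizers of a modular function are exactly the sets lying
between its strictly negative and its nonpositive support.
-/

open Filter Topology

theorem sum_range_mul_nonneg_of_antitoneOn {a b : ℕ → ℝ} {n : ℕ}
    (ha : AntitoneOn a (Set.Iio n)) (hb : ∀ m < n, 0 ≤ ∑ k ∈ range m, b k)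
    (hbn : ∑ k ∈ range n, b k = 0) : 0 ≤ ∑ k ∈ range n, a k * b k := by
  have := sum_range_by_parts a b n
  simp only [smul_eq_mul, hbn, mul_zero, zero_sub] at this
  rw [this, neg_nonneg]
  refine sum_nonpos fun k hk => mul_nonpos_of_nonpos_of_nonneg ?_ (hb _ ?_)
  · rw [mem_range] at hk
    exact sub_nonpos.2 (ha (by simp; omega) (by simp; omega) k.le_succ)
  · rw [mem_range] at hk
    omega

theorem forall_sum_le_sum_iff {ι : Type*} [Fintype ι] [DecidableEq ι] (w : ι → ℝ)
    (S : Finset ι) :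
    (∀ T : Finset ι, ∑ i ∈ S, w i ≤ ∑ i ∈ T, w i) ↔
      (∀ i, w i < 0 → i ∈ S) ∧ ∀ i ∈ S, w i ≤ 0 := by
  constructor
  · intro h
    refine ⟨fun i hi => ?_, fun i hi => ?_⟩
    · by_contra hS
      have := h (insert i S)
      rw [sum_insert hS] at this
      linarith
    · by_contra hpos
      have := h (S.erase i)
      rw [← add_sum_erase S w hi] at this
      linarith
  · rintro ⟨hneg, hnonpos⟩ T
    have hsum (U : Finset ι) : ∑ i ∈ U, w i = ∑ i, if i ∈ U then w i else 0 := by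
      rw [sum_ite_mem, univ_inter]
    rw [hsum S, hsum T]
    gcongr with i
    by_cases hS : i ∈ S <;> by_cases hT : i ∈ T
    · simp [hS, hT]
    · simpa [hS, hT] using hnonpos i hS
    · simpa [hS, hT] using not_lt.1 (mt (hneg i) hS)
    · simp [hS, hT]

theorem nonpos_of_eventually_le_mul {c b : ℝ} (h : ∀ᶠ t in 𝓝[>] (0 : ℝ), c ≤ t * b) : c ≤ 0 := by
  have hlim : Tendsto (fun t => t * b) (𝓝[>] 0) (𝓝 0) := by
    simpa using ((tendsto_id (x := 𝓝 (0 : ℝ))).mul_const b).mono_left nhdsWithin_le_nhds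
  exact ge_of_tendsto hlim h

theorem sum_sq_add_smul {ι : Type*} [Fintype ι] (x v : ι → ℝ) (t : ℝ) :
    ∑ i, (x + t • v) i ^ 2
      = ∑ i, x i ^ 2 + 2 * t * ∑ i, x i * v i + t ^ 2 * ∑ i, v i ^ 2 := by
  have h (i : ι) : (x + t • v) i ^ 2 = x i ^ 2 + 2 * t * (x i * v i) + t ^ 2 * v i ^ 2 := by
    simp only [Pi.add_apply, Pi.smul_apply, smul_eq_mul]; ring
  simp only [h, sum_add_distrib, ← mul_sum]

theorem Fin.mem_iff_lt_card_of_isLowerSet {n : ℕ} {K : Finset (Fin n)}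
    (hK : IsLowerSet (K : Set (Fin n))) (j : Fin n) : j ∈ K ↔ (j : ℕ) < #K := by
  rcases hK.eq_univ_or_Iio with h | ⟨a, h⟩
  · rw [coe_eq_univ] at h
    simp [h]
  · rw [← coe_Iio, coe_inj] at h
    simp [h]

theorem Submodular.sub_le_sub_of_subset {n : ℕ} {F : Finset (Fin n) → ℝ} (hF : Submodular F)
    {A B : Finset (Fin n)} (hAB : A ⊆ B) {e : Fin n} (he : e ∉ B) :
    F (insert e B) - F B ≤ F (insert e A) - F A := by
  have h := hF (insert e A) B
  rw [insert_union, union_eq_right.2 hAB, insert_inter_of_notMem he, inter_eq_left.2 hAB] at h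
  linarith

namespace Equiv.Perm

variable {n : ℕ} (σ : Equiv.Perm (Fin n))

def prefixSet (m : ℕ) : Finset (Fin n) :=
  univ.filter fun i => (σ.symm i : ℕ) < m

-- Extended by zero past `n`, so that summation by parts over `range n` applies.
def padded (v : Fin n → ℝ) (k : ℕ) : ℝ :=
  if h : k < n then v (σ ⟨k, h⟩) else 0

@[simp]
theorem mem_prefixSet {m : ℕ} {i : Fin n} : i ∈ σ.prefixSet m ↔ (σ.symm i : ℕ) < m := by
  simp [prefixSet]

@[simp]
theorem prefixSet_zero : σ.prefixSet 0 = ∅ := by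
  ext; simp

theorem prefixSet_self : σ.prefixSet n = univ := by
  ext i; simp

theorem prefixSet_succ {m : ℕ} (hm : m < n) :
    σ.prefixSet (m + 1) = insert (σ ⟨m, hm⟩) (σ.prefixSet m) := by
  ext i
  rw [mem_prefixSet, mem_insert, mem_prefixSet, ← Equiv.symm_apply_eq, Fin.ext_iff,
    Nat.lt_succ_iff_lt_or_eq, or_comm]

theorem sum_prefixSet (v : Fin n → ℝ) {m : ℕ} (hm : m ≤ n) :
    ∑ i ∈ σ.prefixSet m, v i = ∑ k ∈ range m, σ.padded v k := by
  induction m with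
  | zero => simp
  | succ m ih =>
    rw [σ.prefixSet_succ hm, sum_insert (by simp), sum_range_succ, ih (by omega), padded,
      dif_pos (show m < n from hm), add_comm]

end Equiv.Perm

section Lovasz

variable {n : ℕ}

def greedyVec (F : Finset (Fin n) → ℝ) (σ : Equiv.Perm (Fin n)) (i : Fin n) : ℝ :=
  F (σ.prefixSet (σ.symm i + 1)) - F (σ.prefixSet (σ.symm i))

section Greedy

variable {F : Finset (Fin n) → ℝ} (σ : Equiv.Perm (Fin n))

theorem greedyVec_apply_perm {m : ℕ} (hm : m < n) :
    greedyVec F σ (σ ⟨m, hm⟩) = F (σ.prefixSet (m + 1)) - F (σ.prefixSet m) := by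
  simp [greedyVec]

theorem sum_greedyVec_prefixSet (hF0 : F ∅ = 0) {m : ℕ} (hm : m ≤ n) :
    ∑ i ∈ σ.prefixSet m, greedyVec F σ i = F (σ.prefixSet m) := by
  rw [σ.sum_prefixSet _ hm, sum_congr rfl fun k hk => ?_,
    sum_range_sub (fun k => F (σ.prefixSet k)), σ.prefixSet_zero, hF0, sub_zero]
  have hk : k < n := (mem_range.1 hk).trans_le hm
  rw [Equiv.Perm.padded, dif_pos hk, greedyVec_apply_perm]

theorem sum_greedyVec_le (hF0 : F ∅ = 0) (hF : Submodular F) (S : Finset (Fin n)) :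
    ∑ i ∈ S, greedyVec F σ i ≤ F S := by
  suffices h : ∀ m ≤ n, ∑ i ∈ S ∩ σ.prefixSet m, greedyVec F σ i ≤ F (S ∩ σ.prefixSet m) by
    simpa [σ.prefixSet_self] using h n le_rfl
  intro m hm
  induction m with
  | zero => simp [hF0]
  | succ m ih =>
    have hm : m < n := hm
    have he : σ ⟨m, hm⟩ ∉ σ.prefixSet m := by simp
    rw [σ.prefixSet_succ hm]
    by_cases heS : σ ⟨m, hm⟩ ∈ S
    · rw [inter_insert_of_mem heS, sum_insert (fun h => he (mem_inter.1 h).2),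
        greedyVec_apply_perm, σ.prefixSet_succ hm]
      have := hF.sub_le_sub_of_subset (inter_subset_right (s₁ := S)) he
      linarith [ih hm.le]
    · rw [inter_insert_of_notMem heS]
      exact ih hm.le

theorem greedyVec_mem_basePolytope (hF0 : F ∅ = 0) (hF : Submodular F) :
    greedyVec F σ ∈ basePolytope F :=
  ⟨sum_greedyVec_le σ hF0 hF, by
    simpa [σ.prefixSet_self] using sum_greedyVec_prefixSet σ hF0 le_rfl⟩

theorem lovaszVal_eq_sum_mul_greedyVec (x : Fin n → ℝ) :
    lovaszVal F x σ = ∑ i, x i * greedyVec F σ i := by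
  rw [lovaszVal, ← Equiv.sum_comp σ (fun i => x i * greedyVec F σ i)]
  refine sum_congr rfl fun k _ => ?_
  have image_filter (m : ℕ) :
      (univ.filter fun j : Fin n => (j : ℕ) < m).image σ = σ.prefixSet m := by
    ext i
    simp only [mem_image, mem_filter, mem_univ, true_and, Equiv.Perm.mem_prefixSet]
    exact ⟨by rintro ⟨j, hj, rfl⟩; simpa, fun h => ⟨σ.symm i, h, by simp⟩⟩
  have hle : (univ.filter fun j => j ≤ k) = univ.filter fun j : Fin n => (j : ℕ) < k + 1 := by
    ext j; simp only [mem_filter, mem_univ, true_and, Fin.le_def]; omega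
  have hlt : (univ.filter fun j => j < k) = univ.filter fun j : Fin n => (j : ℕ) < k := by
    ext j; simp only [mem_filter, mem_univ, true_and, Fin.lt_def]
  rw [hle, hlt, image_filter, image_filter]
  simp [greedyVec]

theorem sum_mul_le_lovaszVal (hF0 : F ∅ = 0) {x y : Fin n → ℝ} (hσ : SortsDesc x σ)
    (hy : y ∈ basePolytope F) : ∑ i, x i * y i ≤ lovaszVal F x σ := by
  rw [lovaszVal_eq_sum_mul_greedyVec, ← sub_nonneg, ← sum_sub_distrib]
  set b : Fin n → ℝ := fun i => greedyVec F σ i - y i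
  have hsum (m : ℕ) (hm : m ≤ n) :
      ∑ k ∈ range m, σ.padded b k = F (σ.prefixSet m) - ∑ i ∈ σ.prefixSet m, y i := by
    rw [← σ.sum_prefixSet _ hm, sum_sub_distrib, sum_greedyVec_prefixSet σ hF0 hm]
  have hx : AntitoneOn (σ.padded x) (Set.Iio n) := fun k hk l hl hkl => by
    simp only [Equiv.Perm.padded, dif_pos (Set.mem_Iio.1 hk), dif_pos (Set.mem_Iio.1 hl)]
    exact hσ _ _ (Fin.mk_le_mk.2 hkl)
  calc 0 ≤ ∑ k ∈ range n, σ.padded x k * σ.padded b k :=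
        sum_range_mul_nonneg_of_antitoneOn hx
          (fun m hm => by rw [hsum m hm.le]; exact sub_nonneg.2 (hy.1 _))
          (by rw [hsum n le_rfl, σ.prefixSet_self, hy.2, sub_self])
    _ = ∑ i, (x i * greedyVec F σ i - x i * y i) := by
      rw [← σ.prefixSet_self, σ.sum_prefixSet _ le_rfl]
      refine sum_congr rfl fun k _ => ?_
      simp only [Equiv.Perm.padded, b]
      split_ifs <;> ring

end Greedy

theorem exists_sortsDesc (x : Fin n → ℝ) : ∃ σ : Equiv.Perm (Fin n), SortsDesc x σ :=
  ⟨Tuple.sort (-x), fun _ _ hjk => by simpa using Tuple.monotone_sort (-x) hjk⟩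

namespace SortsDesc

variable {x y : Fin n → ℝ} {σ : Equiv.Perm (Fin n)}

theorem add (hx : SortsDesc x σ) (hy : SortsDesc y σ) : SortsDesc (x + y) σ :=
  fun j k hjk => add_le_add (hx j k hjk) (hy j k hjk)

theorem smul (hx : SortsDesc x σ) {t : ℝ} (ht : 0 ≤ t) : SortsDesc (t • x) σ :=
  fun j k hjk => mul_le_mul_of_nonneg_left (hx j k hjk) ht

theorem prefixSet_card_eq (hσ : SortsDesc x σ) {A : Finset (Fin n)}
    (hA : ∀ i ∈ A, ∀ j ∉ A, x j < x i) : σ.prefixSet #A = A := by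
  set K := univ.filter fun j => σ j ∈ A
  have hK : IsLowerSet (K : Set (Fin n)) := fun k j hjk hk => by
    simp only [K, coe_filter, mem_univ, true_and, Set.mem_ofPred_eq] at hk ⊢
    by_contra hj
    exact (hA _ hk _ hj).not_ge (hσ j k hjk)
  have hcard : #K = #A := by
    rw [← card_map σ.toEmbedding]
    congr 1
    ext i
    simp [K]
  ext i
  rw [Equiv.Perm.mem_prefixSet, ← hcard, ← Fin.mem_iff_lt_card_of_isLowerSet hK]
  simp [K]

theorem indicator (hσ : SortsDesc x σ) {A : Finset (Fin n)} (hA : ∀ i ∈ A, ∀ j ∉ A, x j < x i) :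
    SortsDesc ((A : Set (Fin n)).indicator 1) σ := fun j k hjk => by
  by_cases hk : σ k ∈ A
  · by_cases hj : σ j ∈ A
    · simp [hj, hk]
    · exact absurd (hσ j k hjk) (hA _ hk _ hj).not_ge
  · simp only [Set.indicator_of_notMem (mem_coe.not.2 hk)]
    exact Set.indicator_nonneg (fun _ _ => zero_le_one) _

theorem eventually_add_smul_neg_indicator (hσ : SortsDesc x σ) {A : Finset (Fin n)}
    (hA : ∀ i ∈ A, ∀ j ∉ A, x j < x i) :
    ∀ᶠ t in 𝓝[>] (0 : ℝ), SortsDesc (x + t • -(A : Set (Fin n)).indicator 1) σ := by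
  have hgap : ∀ᶠ t in 𝓝[>] (0 : ℝ), ∀ i j, i ∈ A → j ∉ A → x j < x i - t := by
    refine eventually_all.2 fun i => eventually_all.2 fun j => ?_
    by_cases hij : i ∈ A ∧ j ∉ A
    · have hlim : Tendsto (fun t => x i - t) (𝓝[>] (0 : ℝ)) (𝓝 (x i)) := by
        simpa using (tendsto_const_nhds.sub (tendsto_id (x := 𝓝 (0 : ℝ)))).mono_left
          nhdsWithin_le_nhds
      exact (hlim.eventually (lt_mem_nhds (hA i hij.1 j hij.2))).mono fun _ ht _ _ => ht
    · exact Eventually.of_forall fun _ hi hj => absurd ⟨hi, hj⟩ hij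
  filter_upwards [hgap] with t ht j k hjk
  have hxjk := hσ j k hjk
  by_cases hk : σ k ∈ A <;> by_cases hj : σ j ∈ A
  · simpa [hj, hk] using hxjk
  · exact absurd hxjk (hA _ hk _ hj).not_ge
  · simpa [hj, hk, le_sub_iff_add_le] using (ht _ _ hj hk).le
  · simpa [hj, hk] using hxjk

end SortsDesc

theorem lovaszVal_add (F : Finset (Fin n) → ℝ) (x y : Fin n → ℝ) (σ : Equiv.Perm (Fin n)) :
    lovaszVal F (x + y) σ = lovaszVal F x σ + lovaszVal F y σ := by
  simp only [lovaszVal, ← sum_add_distrib, Pi.add_apply, add_mul]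

theorem lovaszVal_smul (F : Finset (Fin n) → ℝ) (t : ℝ) (x : Fin n → ℝ)
    (σ : Equiv.Perm (Fin n)) : lovaszVal F (t • x) σ = t * lovaszVal F x σ := by
  simp only [lovaszVal, mul_sum, Pi.smul_apply, smul_eq_mul, mul_assoc]

namespace IsLovasz

variable {F : Finset (Fin n) → ℝ} {f : (Fin n → ℝ) → ℝ}

theorem sum_mul_greedyVec_le (hF0 : F ∅ = 0) (hF : Submodular F) (hf : IsLovasz F f)
    (σ : Equiv.Perm (Fin n)) (x : Fin n → ℝ) : ∑ i, x i * greedyVec F σ i ≤ f x := by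
  obtain ⟨τ, hτ⟩ := exists_sortsDesc x
  rw [hf x τ hτ]
  exact sum_mul_le_lovaszVal τ hF0 hτ (greedyVec_mem_basePolytope σ hF0 hF)

theorem map_add_le (hF0 : F ∅ = 0) (hF : Submodular F) (hf : IsLovasz F f) (x y : Fin n → ℝ) :
    f (x + y) ≤ f x + f y := by
  obtain ⟨σ, hσ⟩ := exists_sortsDesc (x + y)
  rw [hf _ σ hσ, lovaszVal_eq_sum_mul_greedyVec]
  simp only [Pi.add_apply, add_mul, sum_add_distrib]
  exact add_le_add (hf.sum_mul_greedyVec_le hF0 hF σ x) (hf.sum_mul_greedyVec_le hF0 hF σ y)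

theorem map_add_of_sortsDesc (hf : IsLovasz F f) {x y : Fin n → ℝ} {σ : Equiv.Perm (Fin n)}
    (hx : SortsDesc x σ) (hy : SortsDesc y σ) : f (x + y) = f x + f y := by
  rw [hf _ σ (hx.add hy), hf x σ hx, hf y σ hy, lovaszVal_add]

theorem map_smul (hf : IsLovasz F f) {t : ℝ} (ht : 0 ≤ t) (x : Fin n → ℝ) :
    f (t • x) = t * f x := by
  obtain ⟨σ, hσ⟩ := exists_sortsDesc x
  rw [hf _ σ (hσ.smul ht), hf x σ hσ, lovaszVal_smul]

theorem map_indicator (hF0 : F ∅ = 0) (hf : IsLovasz F f) (A : Finset (Fin n)) :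
    f ((A : Set (Fin n)).indicator 1) = F A := by
  obtain ⟨σ, hσ⟩ := exists_sortsDesc ((A : Set (Fin n)).indicator 1)
  have hA : σ.prefixSet #A = A := hσ.prefixSet_card_eq fun i hi j hj => by simp [hi, hj]
  rw [hf _ σ hσ, lovaszVal_eq_sum_mul_greedyVec]
  simp only [Set.indicator_apply, mem_coe, Pi.one_apply, ite_mul, one_mul, zero_mul,
    sum_ite_mem, univ_inter]
  have hcard : #A ≤ n := (card_le_univ A).trans_eq (Fintype.card_fin n)
  rw [← hA, sum_greedyVec_prefixSet σ hF0 hcard]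

end IsLovasz

def IsProxMinimizer (f : (Fin n → ℝ) → ℝ) (xstar : Fin n → ℝ) : Prop :=
  ∀ x : Fin n → ℝ, f xstar + (1/2) * ∑ i, (xstar i)^2 ≤ f x + (1/2) * ∑ i, (x i)^2

namespace IsProxMinimizer

variable {F : Finset (Fin n) → ℝ} {f : (Fin n → ℝ) → ℝ} {xstar : Fin n → ℝ}

theorem add_sum_mul_nonneg (hxstar : IsProxMinimizer f xstar) {v : Fin n → ℝ} {c : ℝ}
    (hv : ∀ᶠ t in 𝓝[>] (0 : ℝ), f (xstar + t • v) ≤ f xstar + t * c) :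
    0 ≤ c + ∑ i, xstar i * v i := by
  refine neg_nonpos.1 (nonpos_of_eventually_le_mul (b := (1/2) * ∑ i, v i ^ 2) ?_)
  filter_upwards [hv, self_mem_nhdsWithin] with t hft (ht : 0 < t)
  have hmin := hxstar (xstar + t • v)
  rw [sum_sq_add_smul] at hmin
  have : 0 ≤ t * (c + ∑ i, xstar i * v i + t * ((1/2) * ∑ i, v i ^ 2)) := by linarith
  linarith [(mul_nonneg_iff_of_pos_left ht).1 this]

theorem neg_sum_le (hF0 : F ∅ = 0) (hF : Submodular F) (hf : IsLovasz F f)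
    (hxstar : IsProxMinimizer f xstar) (T : Finset (Fin n)) : -∑ i ∈ T, xstar i ≤ F T := by
  have h := hxstar.add_sum_mul_nonneg (v := (T : Set (Fin n)).indicator 1) (c := F T) <| by
    filter_upwards [self_mem_nhdsWithin] with t (ht : 0 < t)
    calc f (xstar + t • (T : Set (Fin n)).indicator 1)
        ≤ f xstar + f (t • (T : Set (Fin n)).indicator 1) := hf.map_add_le hF0 hF _ _
      _ = f xstar + t * F T := by rw [hf.map_smul ht.le, hf.map_indicator hF0]
  simp only [Set.indicator_apply, mem_coe, Pi.one_apply, mul_ite, mul_one, mul_zero,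
    sum_ite_mem, univ_inter] at h
  linarith

theorem le_neg_sum (hF0 : F ∅ = 0) (hf : IsLovasz F f) (hxstar : IsProxMinimizer f xstar)
    {A : Finset (Fin n)} (hA : ∀ i ∈ A, ∀ j ∉ A, xstar j < xstar i) :
    F A ≤ -∑ i ∈ A, xstar i := by
  obtain ⟨σ, hσ⟩ := exists_sortsDesc xstar
  have h := hxstar.add_sum_mul_nonneg (v := -(A : Set (Fin n)).indicator 1) (c := -F A) <| by
    filter_upwards [hσ.eventually_add_smul_neg_indicator hA, self_mem_nhdsWithin]
      with t hσt (ht : 0 < t)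
    have hsplit : xstar = (xstar + t • -(A : Set (Fin n)).indicator 1)
        + t • (A : Set (Fin n)).indicator 1 := by
      simp
    have := hf.map_add_of_sortsDesc hσt ((hσ.indicator hA).smul ht.le)
    rw [← hsplit, hf.map_smul ht.le, hf.map_indicator hF0] at this
    linarith
  simp only [Pi.neg_apply, Set.indicator_apply, mem_coe, Pi.one_apply, mul_neg, mul_ite,
    mul_one, mul_zero, sum_neg_distrib, sum_ite_mem, univ_inter] at h
  linarith

end IsProxMinimizer

end Lovasz

/-- thresholding the proximal solution solves all parametric
problems: if `x*` minimizes `f(x) + ½‖x‖²`, then for every `μ ∈ ℝ` the level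
sets `{i : x*_i ≥ μ}` and `{i : x*_i > μ}` minimize `S ↦ F(S) + μ|S|`, and every
minimizer `T` of this function satisfies `{x* > μ} ⊆ T ⊆ {x* ≥ μ}`. -/
theorem statement9 {n : ℕ} (F : Finset (Fin n) → ℝ) (hF0 : F ∅ = 0) (hF : Submodular F)
    (f : (Fin n → ℝ) → ℝ) (hf : IsLovasz F f)
    (xstar : Fin n → ℝ)
    (hxstar : ∀ x : Fin n → ℝ,
      f xstar + (1/2) * ∑ i, (xstar i)^2 ≤ f x + (1/2) * ∑ i, (x i)^2) :
    ∀ μ : ℝ,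
      (∀ T : Finset (Fin n),
        F (Finset.univ.filter (fun i => μ ≤ xstar i))
            + μ * (Finset.univ.filter (fun i => μ ≤ xstar i)).card
          ≤ F T + μ * T.card) ∧
      (∀ T : Finset (Fin n),
        F (Finset.univ.filter (fun i => μ < xstar i))
            + μ * (Finset.univ.filter (fun i => μ < xstar i)).card
          ≤ F T + μ * T.card) ∧
      (∀ T : Finset (Fin n),
        (∀ S : Finset (Fin n), F T + μ * T.card ≤ F S + μ * S.card) →
        Finset.univ.filter (fun i => μ < xstar i) ⊆ T ∧
          T ⊆ Finset.univ.filter (fun i => μ ≤ xstar i)) := by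
  intro μ
  set w : Fin n → ℝ := fun i => μ - xstar i
  have hw (T : Finset (Fin n)) : ∑ i ∈ T, w i = μ * #T - ∑ i ∈ T, xstar i := by
    simp [w, sum_sub_distrib, mul_comm]
  have hminorant (T : Finset (Fin n)) : ∑ i ∈ T, w i ≤ F T + μ * #T := by
    linarith [hw T, IsProxMinimizer.neg_sum_le hF0 hF hf hxstar T]
  have htight (A : Finset (Fin n)) (hA : ∀ i ∈ A, ∀ j ∉ A, xstar j < xstar i) :
      F A + μ * #A = ∑ i ∈ A, w i := by
    linarith [hw A, hminorant A, IsProxMinimizer.le_neg_sum hF0 hf hxstar hA]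
  have hge_min := (forall_sum_le_sum_iff w (univ.filter fun i => μ ≤ xstar i)).2
    ⟨fun i hi => by simpa [w] using (sub_neg.1 hi).le, fun i hi => by simpa [w] using hi⟩
  have hgt_min := (forall_sum_le_sum_iff w (univ.filter fun i => μ < xstar i)).2
    ⟨fun i hi => by simpa [w] using hi, fun i hi => by simpa [w] using (mem_filter.1 hi).2.le⟩
  have hge_tight := htight (univ.filter fun i => μ ≤ xstar i) fun i hi j hj => by
    simp only [mem_filter, mem_univ, true_and, not_le] at hi hj; linarith
  have hgt_tight := htight (univ.filter fun i => μ < xstar i) fun i hi j hj => by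
    simp only [mem_filter, mem_univ, true_and, not_lt] at hi hj; linarith
  rw [hge_tight, hgt_tight]
  refine ⟨fun T => (hge_min T).trans (hminorant T), fun T => (hgt_min T).trans (hminorant T),
    fun T hT => ?_⟩
  have hT_min : ∀ S, ∑ i ∈ T, w i ≤ ∑ i ∈ S, w i := fun S => by
    linarith [hminorant T, hT (univ.filter fun i => μ ≤ xstar i), hge_min S]
  obtain ⟨hneg, hnonpos⟩ := (forall_sum_le_sum_iff w T).1 hT_min
  exact ⟨fun i hi => hneg i (by simpa [w] using hi),
    fun i hi => by simpa [w] using hnonpos i hi⟩
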